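/- Fix real numbers d₁, d₂ and let D_F = diag(d₁, d₂) ∈ M₂(ℂ). Define the causal cone 𝒞 as the set of smooth functions α : ℝ² → M₂(ℂ) which are bounded with bounded first derivatives, take hermitian values, and satisfy at every point the block positivity condition: the 4×4 matrix with blocks [2 ∂_u α, [D_F, α]; −[D_F, α], 2 ∂_v α] is positive semidefinite, where ∂_u = ½(∂₀ + ∂₁) and ∂_v = ½(∂₀ − ∂₁) are the derivatives in the null coordinates u = x⁰ + x¹, v = x⁰ − x¹, and [D_F, α] = D_F α − α D_F. Then for all x = (x⁰, x¹), y = (y⁰, y¹) ∈ ℝ²: y⁰ − x⁰ ≥ |y¹ − x¹| (x precedes y in the Minkowski causal order) if and only if α(x) ≤ α(y) in the Loewner order for every α ∈ 𝒞. -/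

import Mathlib

set_option maxHeartbeats 1000000

open scoped Matrix.Norms.L2Operator ComplexOrder

/-- The causal-cone condition of Franco–Eckstein for the product of the Minkowski plane with
the finite geometry `(M₂(ℂ), ℂ², D_F)`: smooth, bounded with bounded derivative,
hermitian-valued, and at every point the block matrix
`[2∂ᵤα, [D_F, α]; −[D_F, α], 2∂ᵥα]` is positive semidefinite (here `2∂ᵤα` and `2∂ᵥα` are the
directional derivatives along the null directions `(1,1)` and `(1,−1)`). -/
def InCausalCone (DF : Matrix (Fin 2) (Fin 2) ℂ)
    (α : ℝ × ℝ → Matrix (Fin 2) (Fin 2) ℂ) : Prop :=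
  ContDiff ℝ (⊤ : ℕ∞) α ∧
  (∃ K : ℝ, ∀ p, ‖α p‖ ≤ K) ∧
  (∃ K : ℝ, ∀ p, ‖fderiv ℝ α p‖ ≤ K) ∧
  (∀ p, (α p).IsHermitian) ∧
  ∀ p, (Matrix.fromBlocks
      (fderiv ℝ α p (1, 1)) (DF * α p - α p * DF)
      (-(DF * α p - α p * DF)) (fderiv ℝ α p (1, -1))).PosSemidef

noncomputable section

namespace CausalConeAux

open Matrix

lemma ofReal_nonneg' (r : ℝ) (hr : 0 ≤ r) : (0:ℂ) ≤ (r:ℂ) := by exact_mod_cast hr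

lemma psd_add {M N : Matrix (Fin 2) (Fin 2) ℂ} (hM : M.PosSemidef) (hN : N.PosSemidef) :
    (M + N).PosSemidef := by
  exact hM.add hN

/-- `M ↦ (ξ* M ξ).re` as an `ℝ`-linear map. -/
def qf (ξ : Fin 2 → ℂ) : Matrix (Fin 2) (Fin 2) ℂ →ₗ[ℝ] ℝ where
  toFun M := (star ξ ⬝ᵥ M *ᵥ ξ).re
  map_add' M N := by simp only [Matrix.add_mulVec, dotProduct_add, Complex.add_re]
  map_smul' r M := by
    simp [Matrix.smul_mulVec, dotProduct_smul, Complex.smul_re]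
    ring

/-- `M ↦ (ξ* M ξ).re` as a continuous `ℝ`-linear map. -/
def Φ (ξ : Fin 2 → ℂ) : Matrix (Fin 2) (Fin 2) ℂ →L[ℝ] ℝ :=
  LinearMap.toContinuousLinearMap (qf ξ)

lemma Φ_apply (ξ : Fin 2 → ℂ) (M : Matrix (Fin 2) (Fin 2) ℂ) :
    Φ ξ M = (star ξ ⬝ᵥ M *ᵥ ξ).re := rfl

lemma star_quadForm {M : Matrix (Fin 2) (Fin 2) ℂ} (hM : M.IsHermitian) (ξ : Fin 2 → ℂ) :
    star (star ξ ⬝ᵥ M *ᵥ ξ) = star ξ ⬝ᵥ M *ᵥ ξ := by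
  have h1 : star ξ ⬝ᵥ M *ᵥ ξ = star (star (M *ᵥ ξ) ⬝ᵥ ξ) := Matrix.star_dotProduct _ _
  have h2 : star (star ξ ⬝ᵥ M *ᵥ ξ) = star (M *ᵥ ξ) ⬝ᵥ ξ := by rw [h1, star_star]
  rw [h2, Matrix.star_mulVec, ← Matrix.dotProduct_mulVec, hM.eq]

lemma psd_iff_herm_Φ {M : Matrix (Fin 2) (Fin 2) ℂ} (hM : M.IsHermitian) :
    M.PosSemidef ↔ ∀ ξ, 0 ≤ Φ ξ M := by
  constructor
  · intro h ξ
    have h2 := h.dotProduct_mulVec_nonneg ξ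
    rw [Complex.le_def] at h2
    exact h2.1
  · intro h
    refine Matrix.PosSemidef.of_dotProduct_mulVec_nonneg hM (fun ξ => ?_)
    rw [Complex.le_def]
    have him : (star ξ ⬝ᵥ M *ᵥ ξ).im = 0 := by
      have h1 := star_quadForm hM ξ
      have h2 := congrArg Complex.im h1
      simp only [Complex.star_def, Complex.conj_im] at h2
      linarith
    exact ⟨h ξ, him.symm⟩

lemma hasDerivAt_line (α : ℝ × ℝ → Matrix (Fin 2) (Fin 2) ℂ) (hsm : ContDiff ℝ (⊤ : ℕ∞) α)
    (p v : ℝ × ℝ) (ξ : Fin 2 → ℂ) (t : ℝ) :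
    HasDerivAt (fun t => Φ ξ (α (p + t • v))) (Φ ξ (fderiv ℝ α (p + t • v) v)) t := by
  have h1 : HasDerivAt (fun t : ℝ => p + t • v) v t := by
    simpa using ((hasDerivAt_id t).smul_const v).const_add p
  have h2 : HasFDerivAt α (fderiv ℝ α (p + t • v)) (p + t • v) :=
    (hsm.differentiable (by simp) (p + t • v)).hasFDerivAt
  exact (Φ ξ).hasFDerivAt.comp_hasDerivAt t (h2.comp_hasDerivAt t h1)

/-- Monotonicity along a direction `v` whose directional derivative is everywhere PSD. -/
lemma segment_psd (α : ℝ × ℝ → Matrix (Fin 2) (Fin 2) ℂ) (hsm : ContDiff ℝ (⊤ : ℕ∞) α)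
    (hherm : ∀ p, (α p).IsHermitian) (v : ℝ × ℝ)
    (hv : ∀ q, (fderiv ℝ α q v).PosSemidef) (p : ℝ × ℝ) {c : ℝ} (hc : 0 ≤ c) :
    (α (p + c • v) - α p).PosSemidef := by
  rw [psd_iff_herm_Φ ((hherm _).sub (hherm p))]
  intro ξ
  have hdiff : Differentiable ℝ (fun t => Φ ξ (α (p + t • v))) :=
    fun t => (hasDerivAt_line α hsm p v ξ t).differentiableAt
  have hmono : Monotone (fun t => Φ ξ (α (p + t • v))) :=
    monotone_of_deriv_nonneg hdiff (fun t => by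
      rw [(hasDerivAt_line α hsm p v ξ t).deriv]
      have h2 := (hv (p + t • v)).dotProduct_mulVec_nonneg ξ
      rw [Complex.le_def] at h2
      exact h2.1)
  have hle := hmono hc
  simp only [zero_smul, add_zero] at hle
  simpa [map_sub, sub_nonneg] using hle

lemma real_smul_one_eq_diagonal (r : ℝ) :
    r • (1 : Matrix (Fin 2) (Fin 2) ℂ) = Matrix.diagonal (fun _ => (r : ℂ)) := by
  ext i j
  by_cases h : i = j <;>
    simp [Matrix.one_apply, Matrix.diagonal_apply, Matrix.smul_apply, h, Complex.real_smul]

/-- The scalar witness functions lie in the causal cone. -/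
lemma witness_mem (DF : Matrix (Fin 2) (Fin 2) ℂ) (ε : ℝ) (hε : |ε| ≤ 1) :
    InCausalCone DF
      (fun p : ℝ × ℝ => Real.arctan (p.1 + ε * p.2) • (1 : Matrix (Fin 2) (Fin 2) ℂ)) := by
  set L : ℝ × ℝ →L[ℝ] ℝ :=
    ContinuousLinearMap.fst ℝ ℝ ℝ + ε • ContinuousLinearMap.snd ℝ ℝ ℝ with hL
  have hLapp : ∀ p : ℝ × ℝ, L p = p.1 + ε * p.2 := by
    intro p; simp [hL, smul_eq_mul]
  have hfun : (fun p : ℝ × ℝ => Real.arctan (p.1 + ε * p.2) • (1 : Matrix (Fin 2) (Fin 2) ℂ)) =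
      fun p : ℝ × ℝ => Real.arctan (L p) • (1 : Matrix (Fin 2) (Fin 2) ℂ) := by
    funext p; rw [hLapp]
  rw [hfun]
  set α : ℝ × ℝ → Matrix (Fin 2) (Fin 2) ℂ :=
    fun p => Real.arctan (L p) • (1 : Matrix (Fin 2) (Fin 2) ℂ) with hα
  have hfd : ∀ p : ℝ × ℝ, HasFDerivAt α
      (((1 / (1 + (L p) ^ 2)) • L).smulRight (1 : Matrix (Fin 2) (Fin 2) ℂ)) p := by
    intro p
    have h1 : HasFDerivAt (fun q : ℝ × ℝ => Real.arctan (L q)) ((1 / (1 + (L p) ^ 2)) • L) p :=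
      (Real.hasDerivAt_arctan (L p)).comp_hasFDerivAt p L.hasFDerivAt
    exact h1.smul_const (1 : Matrix (Fin 2) (Fin 2) ℂ)
  have hfderiv : ∀ p : ℝ × ℝ, fderiv ℝ α p =
      ((1 / (1 + (L p) ^ 2)) • L).smulRight (1 : Matrix (Fin 2) (Fin 2) ℂ) :=
    fun p => (hfd p).fderiv
  have hgpos : ∀ p : ℝ × ℝ, (0:ℝ) ≤ 1 / (1 + (L p) ^ 2) := by
    intro p; positivity
  have hgle : ∀ p : ℝ × ℝ, 1 / (1 + (L p) ^ 2) ≤ 1 := by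
    intro p
    rw [div_le_one (by positivity)]
    nlinarith [sq_nonneg (L p)]
  refine ⟨?_, ?_, ?_, ?_, ?_⟩
  · exact (Real.contDiff_arctan.comp L.contDiff).smul contDiff_const
  · refine ⟨Real.pi / 2 * ‖(1 : Matrix (Fin 2) (Fin 2) ℂ)‖, fun p => ?_⟩
    rw [hα]
    simp only [norm_smul, Real.norm_eq_abs]
    gcongr
    exact abs_le.mpr ⟨by linarith [Real.neg_pi_div_two_lt_arctan (L p)],
      by linarith [Real.arctan_lt_pi_div_two (L p)]⟩
  · refine ⟨‖L‖ * ‖(1 : Matrix (Fin 2) (Fin 2) ℂ)‖, fun p => ?_⟩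
    rw [hfderiv p, ContinuousLinearMap.norm_smulRight_apply]
    gcongr
    refine le_trans (ContinuousLinearMap.opNorm_smul_le _ _) ?_
    rw [Real.norm_eq_abs, abs_of_nonneg (hgpos p)]
    nlinarith [norm_nonneg L, hgpos p, hgle p]
  · intro p
    rw [hα]
    simp [Matrix.IsHermitian, Matrix.conjTranspose_smul]
  · intro p
    have hc : DF * α p - α p * DF = 0 := by
      rw [hα]
      simp [mul_smul_comm, smul_mul_assoc]
    rw [hc, hfderiv p]
    simp only [ContinuousLinearMap.smulRight_apply, neg_zero]
    have e1 : (((1 / (1 + (L p) ^ 2)) • L) ((1:ℝ), (1:ℝ))) = (1 / (1 + (L p) ^ 2)) * (1 + ε) := by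
      simp only [ContinuousLinearMap.smul_apply, hLapp, smul_eq_mul]
      ring_nf
    have e2 : (((1 / (1 + (L p) ^ 2)) • L) ((1:ℝ), (-1:ℝ))) = (1 / (1 + (L p) ^ 2)) * (1 - ε) := by
      simp only [ContinuousLinearMap.smul_apply, hLapp, smul_eq_mul]
      ring_nf
    rw [e1, e2, real_smul_one_eq_diagonal, real_smul_one_eq_diagonal,
      Matrix.fromBlocks_diagonal]
    rcases abs_le.mp hε with ⟨hε1, hε2⟩
    have hA : (0:ℝ) ≤ 1 / (1 + (L p) ^ 2) * (1 + ε) := by nlinarith [hgpos p]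
    have hB : (0:ℝ) ≤ 1 / (1 + (L p) ^ 2) * (1 - ε) := by nlinarith [hgpos p]
    refine Matrix.posSemidef_diagonal_iff.mpr fun i => ?_
    rcases i with i | i
    · simpa only [Sum.elim_inl] using ofReal_nonneg' _ hA
    · simpa only [Sum.elim_inr] using ofReal_nonneg' _ hB

lemma witness_extract (x y : ℝ × ℝ) (ε : ℝ)
    (h : ((fun p : ℝ × ℝ => Real.arctan (p.1 + ε * p.2) • (1 : Matrix (Fin 2) (Fin 2) ℂ)) y -
      (fun p : ℝ × ℝ => Real.arctan (p.1 + ε * p.2) • (1 : Matrix (Fin 2) (Fin 2) ℂ)) x).PosSemidef) :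
    x.1 + ε * x.2 ≤ y.1 + ε * y.2 := by
  simp only at h
  rw [← sub_smul, real_smul_one_eq_diagonal] at h
  have h0 := Matrix.posSemidef_diagonal_iff.mp h 0
  have h1 : (0:ℝ) ≤ Real.arctan (y.1 + ε * y.2) - Real.arctan (x.1 + ε * x.2) := by
    exact_mod_cast h0
  exact Real.arctan_strictMono.le_iff_le.mp (by linarith)

end CausalConeAux

open CausalConeAux in
/-- the causal cone of the product Lorentzian spectral triple of the Minkowski
plane with `(M₂(ℂ), ℂ², D_F)` recovers exactly the causal order of the Minkowski plane. -/
theorem causalCone_recovers_minkowski_order (d₁ d₂ : ℝ) (x y : ℝ × ℝ) :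
    |y.2 - x.2| ≤ y.1 - x.1 ↔
      ∀ α : ℝ × ℝ → Matrix (Fin 2) (Fin 2) ℂ,
        InCausalCone (Matrix.diagonal ![(d₁ : ℂ), (d₂ : ℂ)]) α →
        (α y - α x).PosSemidef := by
  constructor
  · rintro h α ⟨hsm, -, -, hherm, hblk⟩
    rcases abs_le.mp h with ⟨h1, h2⟩
    have hu : ∀ q, (fderiv ℝ α q ((1:ℝ), (1:ℝ))).PosSemidef := by
      intro q
      have hs := (hblk q).submatrix Sum.inl
      have heq : (Matrix.fromBlocks
          (fderiv ℝ α q (1, 1)) (Matrix.diagonal ![(d₁ : ℂ), (d₂ : ℂ)] * α q - α q * Matrix.diagonal ![(d₁ : ℂ), (d₂ : ℂ)])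
          (-(Matrix.diagonal ![(d₁ : ℂ), (d₂ : ℂ)] * α q - α q * Matrix.diagonal ![(d₁ : ℂ), (d₂ : ℂ)]))
          (fderiv ℝ α q (1, -1))).submatrix Sum.inl Sum.inl
          = fderiv ℝ α q (1, 1) := by
        ext i j; simp
      rwa [heq] at hs
    have hv : ∀ q, (fderiv ℝ α q ((1:ℝ), (-1:ℝ))).PosSemidef := by
      intro q
      have hs := (hblk q).submatrix Sum.inr
      have heq : (Matrix.fromBlocks
          (fderiv ℝ α q (1, 1)) (Matrix.diagonal ![(d₁ : ℂ), (d₂ : ℂ)] * α q - α q * Matrix.diagonal ![(d₁ : ℂ), (d₂ : ℂ)])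
          (-(Matrix.diagonal ![(d₁ : ℂ), (d₂ : ℂ)] * α q - α q * Matrix.diagonal ![(d₁ : ℂ), (d₂ : ℂ)]))
          (fderiv ℝ α q (1, -1))).submatrix Sum.inr Sum.inr
          = fderiv ℝ α q (1, -1) := by
        ext i j; simp
      rwa [heq] at hs
    set a : ℝ := ((y.1 - x.1) + (y.2 - x.2)) / 2 with hadef
    set b : ℝ := ((y.1 - x.1) - (y.2 - x.2)) / 2 with hbdef
    have ha : 0 ≤ a := by rw [hadef]; linarith
    have hb : 0 ≤ b := by rw [hbdef]; linarith
    set m : ℝ × ℝ := x + a • ((1:ℝ), (1:ℝ)) with hm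
    have hp1 := segment_psd α hsm hherm ((1:ℝ), (1:ℝ)) hu x ha
    have hp2 := segment_psd α hsm hherm ((1:ℝ), (-1:ℝ)) hv m hb
    have hy : m + b • ((1:ℝ), (-1:ℝ)) = y := by
      rw [hm]
      apply Prod.ext <;> simp [hadef, hbdef, smul_eq_mul, Prod.fst_add, Prod.snd_add] <;> ring
    rw [hy] at hp2
    have h3 := psd_add hp2 hp1
    rwa [sub_add_sub_cancel] at h3
  · intro h
    have k1 := witness_extract x y 1
      (h _ (witness_mem (Matrix.diagonal ![(d₁ : ℂ), (d₂ : ℂ)]) 1 (by norm_num)))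
    have k2 := witness_extract x y (-1)
      (h _ (witness_mem (Matrix.diagonal ![(d₁ : ℂ), (d₂ : ℂ)]) (-1) (by norm_num)))
    rw [abs_le]
    constructor <;> linarith
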